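/- arXiv:2107.10055 — 3 statements merged into one kernel-verified Lean document; each statement's English description precedes it below -/
import Mathlib

section
/- (Minty) Let A : H ⇉ H be a monotone set-valued operator on a real Hilbert space. Then A is maximally monotone if and only if the range of Id + A is all of H. -/
variable {H : Type*} [NormedAddCommGroup H] [InnerProductSpace ℝ H]

/-- A set `G ⊆ H × H` (the graph of a set-valued operator) is monotone. -/
def IsMonotoneSet (G : Set (H × H)) : Prop :=
  ∀ p ∈ G, ∀ q ∈ G, (inner ℝ (p.2 - q.2) (p.1 - q.1) : ℝ) ≥ 0

/-- A set `G ⊆ H × H` is maximally monotone. -/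
def IsMaxMonotoneSet (G : Set (H × H)) : Prop :=
  IsMonotoneSet G ∧ ∀ G' : Set (H × H), IsMonotoneSet G' → G ⊆ G' → G' = G

/-!
If `Id + A` is onto, a point `(x, y)` monotonically related to all of `G` is compared with the
point of `G` over `x + y`, which forces the two to coincide. Conversely, by maximality it suffices
to find, for each `z`, some `w` with `⟪z - w - y, w - x⟫ ≥ 0` for all `(x, y) ∈ G`, since then
`(w, z - w)` may be added to `G`. Each such condition says that `w` lies in the closed ball with
diameter `[x, z - y]`. Finitely many of these balls meet: a minimiser of a convex quadratic over
the standard simplex gives a saddle point, and monotonicity makes its value nonnegative. Closed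
balls of a Hilbert space are weakly compact, so the whole family meets.
-/

open RealInnerProductSpace Metric Finset Filter Topology InnerProductSpace

theorem nonneg_of_forall_mul_add_sq_mul_nonneg {a b : ℝ}
    (h : ∀ t : ℝ, 0 < t → t ≤ 1 → 0 ≤ t * a + t ^ 2 * b) : 0 ≤ a := by
  have hlim : Tendsto (fun t : ℝ => a + t * b) (𝓝[>] 0) (𝓝 a) :=
    ((by fun_prop : Continuous fun t : ℝ => a + t * b).tendsto' 0 a (by simp)).mono_left
      nhdsWithin_le_nhds
  refine ge_of_tendsto hlim ?_
  filter_upwards [Ioo_mem_nhdsGT one_pos] with t ⟨ht0, ht1⟩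
  have : 0 ≤ t * (a + t * b) := by linarith [h t ht0 ht1.le]
  exact nonneg_of_mul_nonneg_right this ht0

theorem inner_sub_sub_eq_sq_sub_sq (a b u : H) :
    ⟪a - u, u - b⟫ = (‖a - b‖ / 2) ^ 2 - ‖u - midpoint ℝ a b‖ ^ 2 := by
  have hab : a - b = (a - u) + (u - b) := by abel
  have hum : u - midpoint ℝ a b = (2 : ℝ)⁻¹ • ((u - b) - (a - u)) := by
    rw [midpoint_eq_smul_add, invOf_eq_inv]; module
  rw [hab, hum]
  generalize a - u = p, u - b = q
  rw [norm_smul, div_pow, mul_pow, norm_add_sq_real, norm_sub_sq_real, real_inner_comm q,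
    Real.norm_of_nonneg (by norm_num)]
  ring

theorem inner_sub_sub_nonneg_iff_mem_closedBall (a b u : H) :
    0 ≤ ⟪a - u, u - b⟫ ↔ u ∈ closedBall (midpoint ℝ a b) (‖a - b‖ / 2) := by
  rw [inner_sub_sub_eq_sq_sub_sq, sub_nonneg, mem_closedBall, dist_eq_norm,
    sq_le_sq₀ (norm_nonneg _) (by positivity)]

theorem exists_forall_mem_closedBall_of_finite [CompleteSpace H] {ι : Type*} (c : ι → H)
    (r : ι → ℝ) (h : ∀ s : Finset ι, ∃ x, ∀ i ∈ s, x ∈ closedBall (c i) (r i)) :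
    ∃ x, ∀ i, x ∈ closedBall (c i) (r i) := by
  classical
  rcases isEmpty_or_nonempty ι with _ | ⟨⟨i₀⟩⟩
  · exact ⟨0, isEmptyElim⟩
  -- Through the Riesz map the balls become weak-* closed, and compact by Banach–Alaoglu.
  let T (i : ι) : Set (WeakDual ℝ H) :=
    WeakDual.toStrongDual ⁻¹' closedBall (toDual ℝ H (c i)) (r i)
  have hT (x : H) (i : ι) :
      StrongDual.toWeakDual (toDual ℝ H x) ∈ T i ↔ x ∈ closedBall (c i) (r i) := by
    simp [T, mem_closedBall]
  obtain ⟨f, -, hf⟩ :=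
    (WeakDual.isCompact_closedBall (toDual ℝ H (c i₀)) (r i₀)).inter_iInter_nonempty T
      (fun i => WeakDual.isClosed_closedBall _ _) fun s => by
        obtain ⟨x, hx⟩ := h (insert i₀ s)
        exact ⟨_, (hT x i₀).2 (hx i₀ (s.mem_insert_self i₀)),
          Set.mem_iInter₂.2 fun i hi => (hT x i).2 (hx i (s.mem_insert_of_mem hi))⟩
  refine ⟨(toDual ℝ H).symm (WeakDual.toStrongDual f), fun i => (hT _ i).1 ?_⟩
  simpa using Set.mem_iInter.1 hf i

section Simplex

variable {ι : Type*} [Fintype ι] (c : ι → H) (q : ι → ℝ)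

/-- For `∑ i, m i = 1` this is the maximum over `u` of `∑ i, m i * (2 * ⟪u, c i⟫ - ‖u‖ ^ 2 - q i)`,
attained at `u = ∑ i, m i • c i`. -/
def simplexEnergy (m : ι → ℝ) : ℝ := ‖∑ i, m i • c i‖ ^ 2 - ∑ i, m i * q i

theorem continuous_simplexEnergy : Continuous (simplexEnergy c q) := by
  unfold simplexEnergy; fun_prop

theorem simplexEnergy_segment_single [DecidableEq ι] (l : ι → ℝ) (j : ι) (t : ℝ) :
    simplexEnergy c q ((1 - t) • l + t • Pi.single j 1) =
      simplexEnergy c q l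
        + t * (2 * ⟪∑ i, l i • c i, c j⟫ - ‖∑ i, l i • c i‖ ^ 2 - q j - simplexEnergy c q l)
        + t ^ 2 * ‖c j - ∑ i, l i • c i‖ ^ 2 := by
  set w := ∑ i, l i • c i
  have hw : ∑ i, ((1 - t) • l + t • Pi.single j 1 : ι → ℝ) i • c i = w + t • (c j - w) := by
    simp only [Pi.add_apply, Pi.smul_apply, smul_eq_mul, add_smul, mul_smul, sum_add_distrib,
      ← smul_sum, Pi.single_apply, ite_smul, one_smul, zero_smul, sum_ite_eq', mem_univ, if_true, w]
    module
  have hq : ∑ i, ((1 - t) • l + t • Pi.single j 1 : ι → ℝ) i * q i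
      = (1 - t) * ∑ i, l i * q i + t * q j := by
    simp only [Pi.add_apply, Pi.smul_apply, smul_eq_mul, add_mul, mul_assoc, sum_add_distrib,
      ← mul_sum, Pi.single_apply, ite_mul, one_mul, zero_mul, sum_ite_eq', mem_univ, if_true]
  rw [simplexEnergy, simplexEnergy, hw, hq, norm_add_sq_real, norm_smul, mul_pow,
    real_inner_smul_right, inner_sub_right, real_inner_self_eq_norm_sq, Real.norm_eq_abs, sq_abs]
  ring

/-- With `l` a minimiser of `simplexEnergy c q` on the simplex and `w = ∑ i, l i • c i`, both sides
are compared with the minimum value: the left one by maximising over `u`, the right one by the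
first-order condition at `l` in the direction of the vertex `j`. -/
theorem exists_mem_stdSimplex_sum_le [Nonempty ι] :
    ∃ l ∈ stdSimplex ℝ ι, ∃ w : H, ∀ (u : H) (j : ι),
      ∑ i, l i * (2 * ⟪u, c i⟫ - ‖u‖ ^ 2 - q i) ≤ 2 * ⟪w, c j⟫ - ‖w‖ ^ 2 - q j := by
  classical
  obtain ⟨l, hl, hmin⟩ := (isCompact_stdSimplex ℝ ι).exists_isMinOn
    ⟨_, single_mem_stdSimplex ℝ (Classical.arbitrary ι)⟩ (continuous_simplexEnergy c q).continuousOn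
  set w := ∑ i, l i • c i
  refine ⟨l, hl, w, fun u j => le_trans (b := simplexEnergy c q l) ?_ ?_⟩
  · have hsum : ∑ i, l i * (2 * ⟪u, c i⟫ - ‖u‖ ^ 2 - q i)
        = 2 * ⟪u, w⟫ - ‖u‖ ^ 2 - ∑ i, l i * q i := by
      simp only [mul_sub, sum_sub_distrib, ← sum_mul, hl.2, one_mul, inner_sum,
        real_inner_smul_right, w, mul_sum]
      congr 2
      exact sum_congr rfl fun i _ => by ring
    rw [hsum, simplexEnergy]
    nlinarith [norm_sub_sq_real u w, sq_nonneg ‖u - w‖]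
  · suffices 0 ≤ 2 * ⟪w, c j⟫ - ‖w‖ ^ 2 - q j - simplexEnergy c q l by linarith
    refine nonneg_of_forall_mul_add_sq_mul_nonneg (b := ‖c j - w‖ ^ 2) fun t ht0 ht1 => ?_
    have hseg := isMinOn_iff.1 hmin _ <| convex_stdSimplex ℝ ι hl (single_mem_stdSimplex ℝ j)
      (a := 1 - t) (b := t) (by linarith) ht0.le (by ring)
    rw [simplexEnergy_segment_single] at hseg
    linarith

end Simplex

section FiniteFamily

variable {ι : Type*} [Fintype ι] (x y : ι → H)

theorem sum_sum_mul_inner_sub_nonpos (l : ι → ℝ) (hl : ∀ i, 0 ≤ l i)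
    (mono : ∀ i j, 0 ≤ ⟪y i - y j, x i - x j⟫) :
    ∑ i, ∑ j, l i * l j * ⟪y i, x j - x i⟫ ≤ 0 := by
  have hsymm : 2 * ∑ i, ∑ j, l i * l j * ⟪y i, x j - x i⟫
      = -∑ i, ∑ j, l i * l j * ⟪y i - y j, x i - x j⟫ := by
    conv_lhs => rw [two_mul]; arg 2; rw [sum_comm]
    simp only [← sum_add_distrib, ← sum_neg_distrib]
    refine sum_congr rfl fun i _ => sum_congr rfl fun j _ => ?_
    simp only [inner_sub_left, inner_sub_right]
    ring
  have : 0 ≤ ∑ i, ∑ j, l i * l j * ⟪y i - y j, x i - x j⟫ :=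
    sum_nonneg fun i _ => sum_nonneg fun j _ => mul_nonneg (mul_nonneg (hl i) (hl j)) (mono i j)
  linarith

theorem sum_mul_inner_sub_sum_smul_nonneg (z : H) {l : ι → ℝ} (hl : l ∈ stdSimplex ℝ ι)
    (mono : ∀ i j, 0 ≤ ⟪y i - y j, x i - x j⟫) :
    0 ≤ ∑ i, l i * ⟪z - ∑ k, l k • x k - y i, ∑ k, l k • x k - x i⟫ := by
  set u := ∑ k, l k • x k
  have hdev (i : ι) : u - x i = ∑ j, l j • (x j - x i) := by
    simp only [smul_sub, sum_sub_distrib, ← sum_smul, hl.2, one_smul, u]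
  have hmean : ∑ i, l i * ⟪z - u, u - x i⟫ = 0 := by
    simp only [← real_inner_smul_right, ← inner_sum, smul_sub, sum_sub_distrib, ← sum_smul,
      hl.2, one_smul, u, sub_self, inner_zero_right]
  have hcross : ∑ i, l i * ⟪y i, u - x i⟫ = ∑ i, ∑ j, l i * l j * ⟪y i, x j - x i⟫ := by
    refine sum_congr rfl fun i _ => ?_
    rw [hdev, inner_sum, mul_sum]
    exact sum_congr rfl fun j _ => by rw [real_inner_smul_right]; ring
  have hsplit : ∑ i, l i * ⟪z - u - y i, u - x i⟫
      = ∑ i, l i * ⟪z - u, u - x i⟫ - ∑ i, l i * ⟪y i, u - x i⟫ := by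
    rw [← sum_sub_distrib]
    exact sum_congr rfl fun i _ => by rw [inner_sub_left, mul_sub]
  rw [hsplit, hmean, hcross]
  linarith [sum_sum_mul_inner_sub_nonpos x y l hl.1 mono]

theorem exists_forall_inner_nonneg_of_fintype (z : H)
    (mono : ∀ i j, 0 ≤ ⟪y i - y j, x i - x j⟫) :
    ∃ w : H, ∀ i, 0 ≤ ⟪z - w - y i, w - x i⟫ := by
  rcases isEmpty_or_nonempty ι with _ | _
  · exact ⟨0, isEmptyElim⟩
  have hquad (u : H) (i : ι) : ⟪z - u - y i, u - x i⟫
      = 2 * ⟪u, (2 : ℝ)⁻¹ • (x i + z - y i)⟫ - ‖u‖ ^ 2 - ⟪z - y i, x i⟫ := by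
    rw [real_inner_smul_right, ← real_inner_self_eq_norm_sq]
    simp only [inner_sub_left, inner_sub_right, inner_add_right]
    rw [real_inner_comm z u, real_inner_comm (y i) u]
    ring
  obtain ⟨l, hl, w, hw⟩ :=
    exists_mem_stdSimplex_sum_le (fun i => (2 : ℝ)⁻¹ • (x i + z - y i)) fun i => ⟪z - y i, x i⟫
  refine ⟨w, fun j => ?_⟩
  have := sum_mul_inner_sub_sum_smul_nonneg x y z hl mono
  simp only [hquad] at this ⊢
  exact this.trans (hw _ j)

end FiniteFamily

theorem IsMonotoneSet.exists_forall_inner_nonneg [CompleteSpace H] {G : Set (H × H)}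
    (hG : IsMonotoneSet G) (z : H) : ∃ w : H, ∀ p ∈ G, 0 ≤ ⟪z - w - p.2, w - p.1⟫ := by
  have hball (w : H) (p : H × H) : 0 ≤ ⟪z - w - p.2, w - p.1⟫ ↔
      w ∈ closedBall (midpoint ℝ (z - p.2) p.1) (‖z - p.2 - p.1‖ / 2) := by
    rw [sub_right_comm]
    exact inner_sub_sub_nonneg_iff_mem_closedBall _ _ _
  obtain ⟨w, hw⟩ := exists_forall_mem_closedBall_of_finite (ι := G)
    (fun p => midpoint ℝ (z - p.1.2) p.1.1) (fun p => ‖z - p.1.2 - p.1.1‖ / 2) fun s => by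
      obtain ⟨w, hw⟩ := exists_forall_inner_nonneg_of_fintype (ι := s) (fun p => p.1.1.1)
        (fun p => p.1.1.2) z fun p p' => hG _ p.1.2 _ p'.1.2
      exact ⟨w, fun p hp => (hball w p).1 (hw ⟨p, hp⟩)⟩
  exact ⟨w, fun p hp => (hball w p).2 (hw ⟨p, hp⟩)⟩

theorem IsMonotoneSet.insert {G : Set (H × H)} (hG : IsMonotoneSet G) {p : H × H}
    (hp : ∀ q ∈ G, 0 ≤ ⟪p.2 - q.2, p.1 - q.1⟫) : IsMonotoneSet (insert p G) := by
  rintro q (rfl | hq) q' (rfl | hq')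
  · simp
  · exact hp q' hq'
  · rw [← inner_neg_neg, neg_sub, neg_sub]
    exact hp q hq
  · exact hG q hq q' hq'

theorem IsMonotoneSet.isMaxMonotoneSet_of_forall_exists_add_eq {G : Set (H × H)}
    (hG : IsMonotoneSet G) (hsurj : ∀ z : H, ∃ p ∈ G, p.1 + p.2 = z) : IsMaxMonotoneSet G := by
  refine ⟨hG, fun G' hG' hGG' => Set.Subset.antisymm (fun x hx => ?_) hGG'⟩
  obtain ⟨p, hp, hpx⟩ := hsurj (x.1 + x.2)
  have hfst : x.1 - p.1 = -(x.2 - p.2) := by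
    rw [eq_neg_iff_add_eq_zero, ← sub_eq_zero.2 hpx.symm]
    abel
  have hsnd : x.2 - p.2 = 0 := by
    have := hG' x hx p (hGG' hp)
    rw [hfst, inner_neg_right, ge_iff_le, neg_nonneg] at this
    exact real_inner_self_nonpos.1 this
  rw [hsnd, neg_zero] at hfst
  rwa [Prod.ext (sub_eq_zero.1 hfst) (sub_eq_zero.1 hsnd)]

/-- Minty's theorem: a monotone operator `A` (with graph `G`) on a real Hilbert space
is maximally monotone iff the range of `Id + A` is all of `H`. -/
theorem minty [CompleteSpace H] (G : Set (H × H)) (hG : IsMonotoneSet G) :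
    IsMaxMonotoneSet G ↔ ∀ z : H, ∃ p ∈ G, p.1 + p.2 = z := by
  refine ⟨fun hmax z => ?_, hG.isMaxMonotoneSet_of_forall_exists_add_eq⟩
  obtain ⟨w, hw⟩ := hG.exists_forall_inner_nonneg z
  have hGw : insert (w, z - w) G = G := hmax.2 _ (hG.insert hw) (Set.subset_insert _ _)
  exact ⟨(w, z - w), hGw ▸ Set.mem_insert _ _, add_sub_cancel _ _⟩
end

section
/- Let A : H ⇉ H be a monotone set-valued operator on a real Hilbert space H whose resolvent (Id + A)^{-1} is single-valued and defined on all of H (i.e., for every y ∈ H there is exactly one x with y - x ∈ A(x)). Then A is maximally monotone. -/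
variable {H : Type*} [NormedAddCommGroup H] [InnerProductSpace ℝ H]

/-- If `x + u = z + v` then `⟪u - v, x - z⟫ = -‖x - z‖²`, which monotonicity forces to vanish. -/
theorem IsMonotoneSet.eq_of_add_eq {G : Set (H × H)} (hG : IsMonotoneSet G) {p q : H × H}
    (hp : p ∈ G) (hq : q ∈ G) (hsum : p.1 + p.2 = q.1 + q.2) : p = q := by
  have hsnd : p.2 - q.2 = -(p.1 - q.1) := by
    rw [neg_sub, sub_eq_sub_iff_add_eq_add, add_comm, hsum, add_comm]
  have hmono := hG p hp q hq
  rw [hsnd, inner_neg_left, real_inner_self_eq_norm_sq, ge_iff_le, neg_nonneg] at hmono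
  have hfst : p.1 = q.1 := by
    rw [← sub_eq_zero, ← norm_eq_zero]
    nlinarith [norm_nonneg (p.1 - q.1)]
  rw [hfst, add_right_inj] at hsum
  exact Prod.ext hfst hsum

/-- A monotone operator whose resolvent is single-valued and everywhere defined is
maximally monotone. -/
theorem monotone_with_full_single_valued_resolvent_is_maximal
    (G : Set (H × H)) (hG : IsMonotoneSet G)
    (hres : ∀ y : H, ∃! x : H, (x, y - x) ∈ G) :
    IsMaxMonotoneSet G := by
  refine ⟨hG, fun G' hG' hsub => Set.Subset.antisymm ?_ hsub⟩
  rintro ⟨x, u⟩ hxu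
  obtain ⟨z, hz, -⟩ := hres (x + u)
  have hxu_eq : (x, u) = (z, x + u - z) :=
    hG'.eq_of_add_eq hxu (hsub hz) (add_sub_cancel z (x + u)).symm
  rwa [hxu_eq]
end

section
/- Let B : H ⇉ H be maximally monotone, y ∈ H, x := J_B(y). Suppose B is proto-differentiable at x relative to y - x ∈ B(x) with maximally monotone proto-derivative D := D_pB(x|y-x). Then J_B is directionally differentiable at y and J_B'(y; h) = (Id + D)^{-1}(h) for all h ∈ H. -/
variable {H : Type*} [NormedAddCommGroup H] [InnerProductSpace ℝ H]

open Filter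

/-- Graphical (Kuratowski) convergence of a `τ`-indexed family of graphs
`Δ τ ⊆ H × H` to a set `D` as `τ ↘ 0`. -/
def GraphConvTo {H : Type*} [NormedAddCommGroup H]
    (Δ : ℝ → Set (H × H)) (D : Set (H × H)) : Prop :=
  -- inner limit: every point of D is attained along every sequence τₖ ↘ 0
  (∀ p ∈ D, ∀ τk : ℕ → ℝ, (∀ k, 0 < τk k) → Tendsto τk atTop (nhds 0) →
    ∃ pk : ℕ → H × H, (∀ k, pk k ∈ Δ (τk k)) ∧ Tendsto pk atTop (nhds p)) ∧
  -- outer limit: every graphical limit point lies in D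
  (∀ (τk : ℕ → ℝ), (∀ k, 0 < τk k) → Tendsto τk atTop (nhds 0) →
    ∀ pk : ℕ → H × H, (∀ k, pk k ∈ Δ (τk k)) →
    ∀ p : H × H, Tendsto pk atTop (nhds p) → p ∈ D)

/-- The difference-quotient graphs of `B` (with graph `G`) at `x` relative to `v`:
`(h, w) ∈ Δ τ` iff `(x + τ h, v + τ w) ∈ G`. -/
def protoQuot {H : Type*} [NormedAddCommGroup H] [Module ℝ H]
    (G : Set (H × H)) (x v : H) (τ : ℝ) : Set (H × H) :=
  {p : H × H | (x + τ • p.1, v + τ • p.2) ∈ G}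

/-! Put `q τ = τ⁻¹ • (J (y + τ • h) - J y)`. Then `(q τ, h - q τ)` lies in the difference-quotient
graph `Δ τ = protoQuot G x (y - x) τ`, which is monotone and contains `(0, 0)`, so `‖q τ‖ ≤ ‖h‖`.
Passing to a weak cluster point `d` in the monotonicity inequality against `Δ τ`-approximants of a
point `(a, b) ∈ D` (the inner limit) gives `⟪h - d - b, d - a⟫ ≥ 0`, so `(d, h - d) ∈ D` by
maximality of `D`; this replaces Minty's theorem for `D`. Finally, monotonicity of `Δ τ` against
approximants `p τ` of `(d, h - d)` gives `‖q τ - (p τ).1‖ ≤ ‖h - (p τ).1 - (p τ).2‖ → 0`, so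
`q τ → d` strongly. -/

open Topology InnerProductSpace RealInnerProductSpace

theorem IsMonotoneSet.norm_sub_le_of_mem {G : Set (H × H)} (hG : IsMonotoneSet G) {a b z w : H}
    (ha : (a, z - a) ∈ G) (hb : (b, w - b) ∈ G) : ‖a - b‖ ≤ ‖z - w‖ := by
  have hm : 0 ≤ ⟪(z - w) - (a - b), a - b⟫ := by
    have := hG _ ha _ hb
    rwa [show z - a - (w - b) = (z - w) - (a - b) by abel] at this
  rw [inner_sub_left, real_inner_self_eq_norm_sq] at hm
  have := real_inner_le_norm (z - w) (a - b)
  nlinarith [norm_nonneg (a - b), norm_nonneg (z - w)]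

theorem IsMonotoneSet.protoQuot {G : Set (H × H)} (hG : IsMonotoneSet G) (x v : H) {τ : ℝ}
    (hτ : τ ≠ 0) : IsMonotoneSet (protoQuot G x v τ) := by
  intro p hp q hq
  have hm := hG _ hp _ hq
  simp only [add_sub_add_left_eq_sub, ← smul_sub, real_inner_smul_left, real_inner_smul_right,
    ← mul_assoc] at hm
  exact (mul_nonneg_iff_of_pos_left (mul_self_pos.2 hτ)).1 hm

theorem resolvent_diffQuot_mem_protoQuot {G : Set (H × H)} {J : H → H}
    (hJ : ∀ z, (J z, z - J z) ∈ G) (y h : H) {τ : ℝ} (hτ : τ ≠ 0) :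
    (τ⁻¹ • (J (y + τ • h) - J y), h - τ⁻¹ • (J (y + τ • h) - J y)) ∈
      protoQuot G (J y) (y - J y) τ := by
  simp only [protoQuot, Set.mem_ofPred_eq, smul_sub, smul_inv_smul₀ hτ]
  convert hJ (y + τ • h) using 2 <;> abel

theorem tendsto_of_forall_mem_isMonotoneSet {ι : Type*} {l : Filter ι} {Δ : ι → Set (H × H)}
    (hΔ : ∀ i, IsMonotoneSet (Δ i)) {Q : ι → H} {h d : H} (hQ : ∀ i, (Q i, h - Q i) ∈ Δ i)
    {p : ι → H × H} (hp : ∀ i, p i ∈ Δ i) (hlim : Tendsto p l (𝓝 (d, h - d))) :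
    Tendsto Q l (𝓝 d) := by
  have hle : ∀ i, ‖Q i - (p i).1‖ ≤ ‖h - ((p i).1 + (p i).2)‖ := fun i =>
    (hΔ i).norm_sub_le_of_mem (hQ i) (by simpa using hp i)
  have hres : Tendsto (fun i => h - ((p i).1 + (p i).2)) l (𝓝 0) := by
    simpa using (tendsto_const_nhds (x := h)).sub (hlim.fst_nhds.add hlim.snd_nhds)
  have hgap : Tendsto (fun i => Q i - (p i).1) l (𝓝 0) :=
    squeeze_zero_norm hle (by simpa using hres.norm)
  simpa using hgap.add hlim.fst_nhds

theorem tendsto_inner_of_tendsto_of_weak {ι : Type*} {l : Filter ι} {u v : ι → H} {a b : H}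
    {C : ℝ} (hu : Tendsto u l (𝓝 a)) (hv : ∀ w, Tendsto (fun i => ⟪v i, w⟫) l (𝓝 ⟪b, w⟫))
    (hC : ∀ i, ‖v i‖ ≤ C) : Tendsto (fun i => ⟪u i, v i⟫) l (𝓝 ⟪a, b⟫) := by
  have hsmall : Tendsto (fun i => ⟪u i - a, v i⟫) l (𝓝 0) := by
    have hu0 := (tendsto_sub_nhds_zero_iff.2 hu).norm.mul_const C
    refine squeeze_zero_norm (fun i => ?_) (by simpa using hu0)
    exact (norm_inner_le_norm _ _).trans (mul_le_mul_of_nonneg_left (hC i) (norm_nonneg _))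
  have := hsmall.add (hv a)
  simp only [inner_sub_left, sub_add_cancel, zero_add, real_inner_comm a] at this
  simpa [real_inner_comm] using this

theorem inner_nonneg_of_weak_limit {ι : Type*} {l : Filter ι} [l.NeBot] {Δ : ι → Set (H × H)}
    (hΔ : ∀ i, IsMonotoneSet (Δ i)) {Q : ι → H} {h d : H} {C : ℝ}
    (hQ : ∀ i, (Q i, h - Q i) ∈ Δ i) (hQb : ∀ i, ‖Q i‖ ≤ C)
    (hweak : ∀ u, Tendsto (fun i => ⟪Q i, u⟫) l (𝓝 ⟪d, u⟫))
    {p : ι → H × H} {a b : H} (hp : ∀ i, p i ∈ Δ i) (hlim : Tendsto p l (𝓝 (a, b))) :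
    0 ≤ ⟪(h - d) - b, d - a⟫ := by
  -- dropping `‖Q i - d‖² ≥ 0` from the monotonicity inequality leaves terms that are linear in
  -- `Q i`, so they pass to the weak limit
  have hbound : ∀ i, 0 ≤ ⟪h - (p i).2 - d, Q i⟫ - ⟪h - (p i).2 - d, (p i).1⟫ -
      (⟪d - (p i).1, Q i⟫ - ⟪d - (p i).1, d⟫) := by
    intro i
    have hm := hΔ i _ (hQ i) _ (hp i)
    have hsq := real_inner_self_nonneg (x := Q i - d)
    simp only [inner_sub_left, inner_sub_right, real_inner_comm] at hm hsq ⊢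
    linarith
  have hu : Tendsto (fun i => h - (p i).2 - d) l (𝓝 (h - b - d)) :=
    (tendsto_const_nhds.sub hlim.snd_nhds).sub tendsto_const_nhds
  have hu' : Tendsto (fun i => d - (p i).1) l (𝓝 (d - a)) :=
    tendsto_const_nhds.sub hlim.fst_nhds
  have hconv := ((tendsto_inner_of_tendsto_of_weak hu hweak hQb).sub
    (hu.inner hlim.fst_nhds)).sub ((tendsto_inner_of_tendsto_of_weak hu' hweak hQb).sub
    (hu'.inner (tendsto_const_nhds (x := d))))
  refine (ge_of_tendsto' hconv hbound).trans_eq ?_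
  simp only [inner_sub_left, inner_sub_right, real_inner_comm]
  ring

theorem exists_ultrafilter_tendsto_inner [CompleteSpace H] {ι : Type*} (l : Filter ι) [l.NeBot]
    {Q : ι → H} {C : ℝ} (hQ : ∀ i, ‖Q i‖ ≤ C) :
    ∃ F : Ultrafilter ι, ↑F ≤ l ∧ ∃ d : H, ∀ u, Tendsto (fun i => ⟪Q i, u⟫) F (𝓝 ⟪d, u⟫) := by
  let F := Ultrafilter.of l
  have hK := WeakDual.isCompact_closedBall (𝕜 := ℝ) (E := H) 0 C
  obtain ⟨ℓ, -, hℓ⟩ := hK.ultrafilter_le_nhds (F.map fun i => (toDual ℝ H (Q i)).toWeakDual) <| by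
    refine le_principal_iff.2 (mem_map.2 (univ_mem' fun i => ?_))
    simpa using hQ i
  refine ⟨F, Ultrafilter.of_le l, (toDual ℝ H).symm ℓ.toStrongDual, fun u => ?_⟩
  rw [toDual_symm_apply]
  exact ((WeakDual.eval_continuous u).tendsto ℓ).comp hℓ

theorem IsMaxMonotoneSet.mem_of_forall_inner_nonneg {D : Set (H × H)} (hD : IsMaxMonotoneSet D)
    {q : H × H} (hq : ∀ p ∈ D, 0 ≤ ⟪q.2 - p.2, q.1 - p.1⟫) : q ∈ D := by
  have hmono : IsMonotoneSet (insert q D) := by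
    rintro p (rfl | hp) p' (rfl | hp')
    · simp
    · exact hq p' hp'
    · rw [ge_iff_le, ← inner_neg_neg, neg_sub, neg_sub]
      exact hq p hp
    · exact hD.1 p hp p' hp'
  exact hD.2 _ hmono (Set.subset_insert _ _) ▸ Set.mem_insert _ _

theorem IsMaxMonotoneSet.exists_mem_of_forall_tendsto [CompleteSpace H] {D : Set (H × H)}
    (hD : IsMaxMonotoneSet D) {ι : Type*} {l : Filter ι} [l.NeBot] {Δ : ι → Set (H × H)}
    (hΔ : ∀ i, IsMonotoneSet (Δ i))
    (hinner : ∀ p ∈ D, ∃ pk : ι → H × H, (∀ i, pk i ∈ Δ i) ∧ Tendsto pk l (𝓝 p))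
    {Q : ι → H} {h : H} {C : ℝ} (hQ : ∀ i, (Q i, h - Q i) ∈ Δ i) (hQb : ∀ i, ‖Q i‖ ≤ C) :
    ∃ d, (d, h - d) ∈ D := by
  obtain ⟨F, hFl, d, hd⟩ := exists_ultrafilter_tendsto_inner l hQb
  refine ⟨d, hD.mem_of_forall_inner_nonneg fun p hp => ?_⟩
  obtain ⟨pk, hpk, hlim⟩ := hinner p hp
  exact inner_nonneg_of_weak_limit hΔ hQ hQb hd hpk (hlim.mono_left hFl)

theorem tendsto_nhdsGT_zero_of_seq {X : Type*} [TopologicalSpace X] {f : ℝ → X} {a : X}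
    (hf : ∀ σ : ℕ → ℝ, (∀ k, 0 < σ k) → Tendsto σ atTop (𝓝 0) →
      Tendsto (fun k => f (σ k)) atTop (𝓝 a)) :
    Tendsto f (𝓝[>] 0) (𝓝 a) := by
  refine tendsto_of_seq_tendsto fun s hs => ?_
  obtain ⟨hs0, hpos⟩ := tendsto_nhdsWithin_iff.1 hs
  obtain ⟨N, hN⟩ := eventually_atTop.1 hpos
  rw [← tendsto_add_atTop_iff_nat N]
  exact hf (fun k => s (k + N)) (fun k => hN _ (Nat.le_add_left N k))
    ((tendsto_add_atTop_iff_nat N).2 hs0)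

/-- If `B` is proto-differentiable at `x = J_B(y)` relative to `y - x ∈ B(x)` with
maximally monotone proto-derivative `D`, then `J_B` is directionally differentiable
at `y` with `J_B'(y; h) = (Id + D)⁻¹ h`. -/
theorem proto_diff_implies_directional_diff
    [CompleteSpace H] (G : Set (H × H)) (hG : IsMaxMonotoneSet G)
    (J : H → H) (hJ : ∀ z : H, (J z, z - J z) ∈ G)
    (y : H) (x : H) (hx : x = J y)
    (D : Set (H × H))
    (hproto : GraphConvTo (protoQuot G x (y - x)) D)
    (hDmax : IsMaxMonotoneSet D) :
    ∀ h : H, ∃ d : H, (d, h - d) ∈ D ∧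
      Tendsto (fun τ : ℝ => τ⁻¹ • (J (y + τ • h) - J y))
        (nhdsWithin 0 (Set.Ioi 0)) (nhds d) := by
  intro h
  subst hx
  set q : ℝ → H := fun τ => τ⁻¹ • (J (y + τ • h) - J y)
  have hΔ : ∀ τ, 0 < τ → IsMonotoneSet (protoQuot G (J y) (y - J y) τ) := fun τ hτ =>
    hG.1.protoQuot _ _ hτ.ne'
  have hq : ∀ τ, 0 < τ → (q τ, h - q τ) ∈ protoQuot G (J y) (y - J y) τ := fun τ hτ =>
    resolvent_diffQuot_mem_protoQuot hJ y h hτ.ne'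
  have h0 : ∀ τ, ((0 : H), (0 : H) - 0) ∈ protoQuot G (J y) (y - J y) τ := by
    simpa [protoQuot] using hJ y
  have hqb : ∀ τ, 0 < τ → ‖q τ‖ ≤ ‖h‖ := fun τ hτ => by
    simpa using (hΔ τ hτ).norm_sub_le_of_mem (hq τ hτ) (h0 τ)
  have hτk : ∀ k : ℕ, 0 < 1 / ((k : ℝ) + 1) := fun k => Nat.one_div_pos_of_nat
  obtain ⟨d, hd⟩ := hDmax.exists_mem_of_forall_tendsto (fun k => hΔ _ (hτk k))
    (fun p hp => hproto.1 p hp _ hτk tendsto_one_div_add_atTop_nhds_zero_nat)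
    (fun k => hq _ (hτk k)) (fun k => hqb _ (hτk k))
  refine ⟨d, hd, tendsto_nhdsGT_zero_of_seq fun σ hσ hσ0 => ?_⟩
  obtain ⟨p, hp, hplim⟩ := hproto.1 _ hd σ hσ hσ0
  exact tendsto_of_forall_mem_isMonotoneSet (fun k => hΔ _ (hσ k)) (fun k => hq _ (hσ k)) hp hplim
end
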